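/- arXiv:2311.07265 — 2 statements merged into one kernel-verified Lean document; each statement's English description precedes it below -/
import Mathlib

section
/- Let C be an 𝔽₂-subspace of V with dim_{𝔽₂} C = n − k, and let γ : C → ℂ with γ(c) ≠ 0 for all c ∈ C be such that the operators g(c) := γ(c)·W(c₁,c₂) (for c = (c₁|c₂) ∈ C) satisfy g(c) ∘ g(c') = g(c + c') for all c, c' ∈ C. For i ∈ V let Q_γ(i) := {f : 𝔽₂^n → ℂ | g(c)f = ε((i,c)ₛ)·f for all c ∈ C}. Then dim_ℂ Q_γ(i) = 2^k for every i ∈ V. -/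
open Finset

/-- `V = 𝔽₂ⁿ × 𝔽₂ⁿ`, elements written `(a|b)`. -/
abbrev Vn (n : ℕ) : Type := (Fin n → ZMod 2) × (Fin n → ZMod 2)

/-- The symplectic inner product `((a|b),(a'|b'))ₛ = a·b' + a'·b`. -/
def symp {n : ℕ} (v w : Vn n) : ZMod 2 :=
  (∑ i, v.1 i * w.2 i) + (∑ i, w.1 i * v.2 i)

lemma symp_add_left {n : ℕ} (a b s : Vn n) : symp (a + b) s = symp a s + symp b s := by
  simp only [symp, Prod.fst_add, Prod.snd_add, Pi.add_apply, add_mul, mul_add,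
    Finset.sum_add_distrib]
  ring

lemma symp_smul_left {n : ℕ} (c : ZMod 2) (v s : Vn n) : symp (c • v) s = c * symp v s := by
  simp only [symp, Prod.smul_fst, Prod.smul_snd, Pi.smul_apply, smul_eq_mul, mul_add,
    Finset.mul_sum]
  congr 1
  · exact Finset.sum_congr rfl fun i _ => by ring
  · exact Finset.sum_congr rfl fun i _ => by ring

/-- The symplectic orthogonal `S^⊥ₛ` of a subset `S ⊆ V`, as an `𝔽₂`-subspace of `V`. -/
def sympOrtho {n : ℕ} (S : Set (Vn n)) : Submodule (ZMod 2) (Vn n) where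
  carrier := {v | ∀ s ∈ S, symp v s = 0}
  zero_mem' := by intro s hs; simp [symp]
  add_mem' := by
    intro a b ha hb s hs
    rw [Set.mem_setOf_eq] at *
    rw [symp_add_left, ha s hs, hb s hs, add_zero]
  smul_mem' := by
    intro c v hv s hs
    rw [Set.mem_setOf_eq] at *
    rw [symp_smul_left, hv s hs, mul_zero]

/-- `ε : 𝔽₂ → ℂ`, `ε(0) = 1`, `ε(1) = -1`. -/
def eps (x : ZMod 2) : ℂ := if x = 0 then 1 else -1

/-- Quantum weight of `(a|b)`: number of positions `i` with `(aᵢ,bᵢ) ≠ (0,0)`. -/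
def wQ {n : ℕ} (v : Vn n) : ℕ :=
  (Finset.univ.filter fun i => (v.1 i, v.2 i) ≠ ((0 : ZMod 2), (0 : ZMod 2))).card

/-- Quotient minimum norm `‖x̄‖ = min_{v ∈ x̄} w_Q(v)` on `V ⧸ H`. -/
noncomputable def qnorm {n : ℕ} (H : Submodule (ZMod 2) (Vn n)) (x : Vn n ⧸ H) : ℕ :=
  sInf {m | ∃ v : Vn n, (Submodule.Quotient.mk v : Vn n ⧸ H) = x ∧ wQ v = m}

/-- Quotient distance `d(x̄,ȳ) = ‖x̄ - ȳ‖` on `V ⧸ H`. -/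
noncomputable def qdist {n : ℕ} (H : Submodule (ZMod 2) (Vn n)) (x y : Vn n ⧸ H) : ℕ :=
  qnorm H (x - y)

/-- The operator `W(a,b)` acting on functions `𝔽₂ⁿ → ℂ`: `(W(a,b)f)(x) = ε(b·x)·f(x+a)`. -/
def Wop {n : ℕ} (a b : Fin n → ZMod 2) (f : (Fin n → ZMod 2) → ℂ) : (Fin n → ZMod 2) → ℂ :=
  fun x => eps (∑ i, b i * x i) * f (x + a)

/-- The joint eigenspace `Q(i)` of the operators `W(c₁,c₂)`, `(c₁|c₂) ∈ C`. -/
def Qset {n : ℕ} (C : Submodule (ZMod 2) (Vn n)) (i : Vn n) : Set ((Fin n → ZMod 2) → ℂ) :=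
  {f | ∀ c ∈ C, ∀ x, Wop c.1 c.2 f x = eps (symp i c) * f x}

/-- Joint eigenspace `Q_γ(i)` for the rescaled operators `g(c) = γ(c)·W(c₁,c₂)`. -/
noncomputable def QgamSub {n : ℕ} (C : Submodule (ZMod 2) (Vn n)) (γ : C → ℂ) (i : Vn n) :
    Submodule ℂ ((Fin n → ZMod 2) → ℂ) where
  carrier := {f | ∀ c : C, ∀ x,
    γ c * Wop (c : Vn n).1 (c : Vn n).2 f x = eps (symp i (c : Vn n)) * f x}
  zero_mem' := by intro c x; simp [Wop]
  add_mem' := by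
    intro f g hf hg c x
    have h1 := hf c x
    have h2 := hg c x
    simp only [Wop, Pi.add_apply] at h1 h2 ⊢
    linear_combination h1 + h2
  smul_mem' := by
    intro a f hf c x
    have h := hf c x
    simp only [Wop, Pi.smul_apply, smul_eq_mul] at h ⊢
    linear_combination a * h

/-!
Twisting `g` by the character `c ↦ ε((i,c)ₛ)` gives a representation of the group `C` whose
invariants are exactly `Q_γ(i)`, so `dim Q_γ(i)` is the average of its character over `C`.
Every `W(a,b)` with `(a|b) ≠ 0` is traceless: for `a ≠ 0` it has zero diagonal, and for `a = 0`
its trace is the sum of the nontrivial character `x ↦ ε(b·x)`. Only `c = 0` contributes, giving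
`2ⁿ / |C| = 2ⁿ / 2ⁿ⁻ᵏ = 2ᵏ`.
-/

lemma ZMod.two_eq_zero_or_eq_one (a : ZMod 2) : a = 0 ∨ a = 1 := by
  revert a; decide

lemma eps_add (a b : ZMod 2) : eps (a + b) = eps a * eps b := by
  rcases a.two_eq_zero_or_eq_one with rfl | rfl <;>
    rcases b.two_eq_zero_or_eq_one with rfl | rfl <;>
    simp [eps, show (1 : ZMod 2) + 1 = 0 from rfl]

lemma eps_mul_self (a : ZMod 2) : eps a * eps a = 1 := by
  rw [← eps_add, CharTwo.add_self_eq_zero, eps, if_pos rfl]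

lemma sum_eps_dotProduct_eq_zero {ι : Type*} [Fintype ι] [DecidableEq ι] {b : ι → ZMod 2}
    (hb : b ≠ 0) : ∑ x : ι → ZMod 2, eps (∑ i, b i * x i) = 0 := by
  obtain ⟨j, hj⟩ := Function.ne_iff.mp hb
  let ψ : AddChar (ι → ZMod 2) ℂ :=
    { toFun := fun x => eps (∑ i, b i * x i)
      map_zero_eq_one' := by simp [eps]
      map_add_eq_mul' := fun x y => by
        simp only [Pi.add_apply, mul_add, sum_add_distrib, eps_add] }
  refine AddChar.sum_eq_zero_of_ne_one (ψ := ψ) (AddChar.ne_one_iff.2 ⟨Pi.single j 1, ?_⟩)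
  have hbj : b j = 1 := (b j).two_eq_zero_or_eq_one.resolve_left hj
  norm_num [ψ, Pi.single_apply, hbj, eps]

lemma LinearMap.trace_eq_sum_apply_single {R X : Type*} [CommRing R] [Fintype X] [DecidableEq X]
    (f : (X → R) →ₗ[R] (X → R)) : LinearMap.trace R _ f = ∑ x, f (Pi.single x 1) x := by
  rw [LinearMap.trace_eq_matrix_trace R (Pi.basisFun R X), Matrix.trace]
  simp

variable {n : ℕ}

def WopLin (a b : Fin n → ZMod 2) : ((Fin n → ZMod 2) → ℂ) →ₗ[ℂ] ((Fin n → ZMod 2) → ℂ) where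
  toFun := Wop a b
  map_add' f g := by ext x; simp only [Wop, Pi.add_apply]; ring
  map_smul' c f := by ext x; simp only [Wop, Pi.smul_apply, smul_eq_mul, RingHom.id_apply]; ring

lemma WopLin_apply (a b : Fin n → ZMod 2) (f : (Fin n → ZMod 2) → ℂ) :
    WopLin a b f = Wop a b f := rfl

lemma WopLin_zero_zero : WopLin (0 : Fin n → ZMod 2) 0 = 1 := by
  ext f x; simp [WopLin_apply, Wop, eps]

lemma trace_WopLin_eq_zero {a b : Fin n → ZMod 2} (hab : (a, b) ≠ 0) :
    LinearMap.trace ℂ _ (WopLin a b) = 0 := by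
  rw [LinearMap.trace_eq_sum_apply_single]
  by_cases ha : a = 0
  · subst ha
    have hb : b ≠ 0 := by simpa using hab
    simpa [WopLin_apply, Wop] using sum_eps_dotProduct_eq_zero hb
  · refine sum_eq_zero fun x _ => ?_
    simp [WopLin_apply, Wop, ha]

lemma symp_add_right (s a b : Vn n) : symp s (a + b) = symp s a + symp s b := by
  simp only [symp, Prod.fst_add, Prod.snd_add, Pi.add_apply, add_mul, mul_add, sum_add_distrib]
  ring

lemma eq_eps_mul_iff {a : ZMod 2} {u v : ℂ} : u = eps a * v ↔ eps a * u = v := by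
  constructor <;> rintro rfl <;> rw [← mul_assoc, eps_mul_self, one_mul]

section Rescaled

variable (C : Submodule (ZMod 2) (Vn n)) (γ : C → ℂ)

def gOp (c : C) : ((Fin n → ZMod 2) → ℂ) →ₗ[ℂ] ((Fin n → ZMod 2) → ℂ) :=
  γ c • WopLin (c : Vn n).1 (c : Vn n).2

variable {C γ}

lemma gOp_add_of_forall_apply
    (hmul : ∀ c c' : C, ∀ (f : (Fin n → ZMod 2) → ℂ) (x : Fin n → ZMod 2),
      γ c * Wop (c : Vn n).1 (c : Vn n).2
          (fun y => γ c' * Wop (c' : Vn n).1 (c' : Vn n).2 f y) x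
        = γ (c + c') * Wop ((c : Vn n) + (c' : Vn n)).1 ((c : Vn n) + (c' : Vn n)).2 f x)
    (c c' : C) : gOp C γ (c + c') = gOp C γ c * gOp C γ c' := by
  refine LinearMap.ext fun f => funext fun x => ?_
  exact (hmul c c' f x).symm

lemma gamma_zero_eq_one (hγ : ∀ c : C, γ c ≠ 0)
    (hadd : ∀ c c' : C, gOp C γ (c + c') = gOp C γ c * gOp C γ c') : γ 0 = 1 := by
  have h := hadd 0 0
  simp only [add_zero, gOp, ZeroMemClass.coe_zero, Prod.fst_zero, Prod.snd_zero, WopLin_zero_zero,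
    smul_mul_smul_comm, one_mul] at h
  have h0 : γ 0 = γ 0 * γ 0 := by simpa using congr_fun (LinearMap.congr_fun h 1) 0
  exact mul_left_cancel₀ (hγ 0) (by rw [mul_one, ← h0])


variable (i : Vn n) (hγ0 : γ 0 = 1) (hadd : ∀ c c' : C, gOp C γ (c + c') = gOp C γ c * gOp C γ c')

def twistedRep : Representation ℂ (Multiplicative C) ((Fin n → ZMod 2) → ℂ) where
  toFun c := eps (symp i c.toAdd) • gOp C γ c.toAdd
  map_one' := by simp [gOp, hγ0, WopLin_zero_zero, symp, eps]
  map_mul' c c' := by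
    simp only [toAdd_mul, hadd, Submodule.coe_add, symp_add_right, eps_add, smul_mul_smul_comm]

lemma twistedRep_apply (c : Multiplicative C) :
    twistedRep i hγ0 hadd c = eps (symp i c.toAdd) • gOp C γ c.toAdd := rfl

lemma QgamSub_eq_invariants : QgamSub C γ i = (twistedRep i hγ0 hadd).invariants := by
  ext f
  rw [Representation.mem_invariants]
  refine forall_congr' fun c => ?_
  rw [funext_iff]
  refine forall_congr' fun x => ?_
  exact eq_eps_mul_iff

lemma character_twistedRep (c : Multiplicative C) :
    (twistedRep i hγ0 hadd).character c = if c = 1 then 2 ^ n else 0 := by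
  split_ifs with hc
  · simp [hc, Module.finrank_fintype_fun_eq_card, ZMod.card]
  · have hc' : (((c.toAdd : C) : Vn n).1, ((c.toAdd : C) : Vn n).2) ≠ 0 := by
      simpa [← toAdd_eq_zero] using hc
    rw [Representation.character, twistedRep_apply, gOp, smul_smul, map_smul,
      trace_WopLin_eq_zero hc', smul_zero]

end Rescaled

theorem QgamSub_finrank_general (n k : ℕ) (hk : k ≤ n) (C : Submodule (ZMod 2) (Vn n))
    (hC : Module.finrank (ZMod 2) C = n - k)
    (γ : C → ℂ) (hγ : ∀ c : C, γ c ≠ 0)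
    (hmul : ∀ c c' : C, ∀ (f : (Fin n → ZMod 2) → ℂ) (x : Fin n → ZMod 2),
      γ c * Wop (c : Vn n).1 (c : Vn n).2
          (fun y => γ c' * Wop (c' : Vn n).1 (c' : Vn n).2 f y) x
        = γ (c + c') * Wop ((c : Vn n) + (c' : Vn n)).1 ((c : Vn n) + (c' : Vn n)).2 f x)
    (i : Vn n) :
    Module.finrank ℂ (QgamSub C γ i) = 2 ^ k := by
  have hadd := gOp_add_of_forall_apply hmul
  have hγ0 := gamma_zero_eq_one hγ hadd
  have hcard : Nat.card (Multiplicative C) = 2 ^ (n - k) := by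
    rw [Nat.card_congr Multiplicative.toAdd, Module.natCard_eq_pow_finrank (K := ZMod 2), hC,
      Nat.card_zmod]
  have : Fintype C := Fintype.ofFinite C
  have : Invertible (Nat.card (Multiplicative C) : ℂ) := invertibleOfNonzero (by simp)
  have key := (twistedRep i hγ0 hadd).card_inv_mul_sum_char_eq_finrank
  simp only [character_twistedRep, sum_ite_eq', mem_univ, if_true, hcard] at key
  rw [QgamSub_eq_invariants i hγ0 hadd, ← Nat.cast_inj (R := ℂ), ← key, ← pow_sub_mul_pow 2 hk]
  push_cast
  field_simp

/-- If `dim C = n - k` and the rescaled operators `g(c) = γ(c)·W(c₁,c₂)`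
form a group, then `dim_ℂ Q_γ(i) = 2^k` for every `i ∈ V`. -/
theorem QgamSub_finrank (n k : ℕ) (hn : 0 < n) (hk : k ≤ n) (C : Submodule (ZMod 2) (Vn n))
    (hC : Module.finrank (ZMod 2) C = n - k)
    (γ : C → ℂ) (hγ : ∀ c : C, γ c ≠ 0)
    (hmul : ∀ c c' : C, ∀ (f : (Fin n → ZMod 2) → ℂ) (x : Fin n → ZMod 2),
      γ c * Wop (c : Vn n).1 (c : Vn n).2
          (fun y => γ c' * Wop (c' : Vn n).1 (c' : Vn n).2 f y) x
        = γ (c + c') * Wop ((c : Vn n) + (c' : Vn n)).1 ((c : Vn n) + (c' : Vn n)).2 f x)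
    (i : Vn n) :
    Module.finrank ℂ (QgamSub C γ i) = 2 ^ k :=
  QgamSub_finrank_general n k hk C hC γ hγ hmul i
end

section
/- (Gilbert–Varshamov-type measurement bound) Let C be an 𝔽₂-subspace of V with C ⊆ C^⊥ₛ and dim_{𝔽₂} C = n − k, let d ≥ 1, C(d−1) := {c ∈ C : w_Q(c) ≤ d−1}, s := dim_{𝔽₂} span(C(d−1)), D := C(d−1)^⊥ₛ, and let D̄ be the image of D in V/C^⊥ₛ. Let ME(d−1) := {ē ∈ D̄ : ‖ē‖ ≤ d−1}. If Ω ⊆ D̄ has pairwise quotient distances all ≥ d and 2^k · |Ω| · |ME(d−1)| < 2^{n−s}, then there exists ω̄ ∈ D̄ with ω̄ ∉ Ω such that d(ω̄, ī) ≥ d for every ī ∈ Ω; hence Ω ∪ {ω̄} still has pairwise quotient distances ≥ d. -/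
open Finset

/-!
The cosets in `D̄` within quotient distance `d - 1` of some codeword of `Ω` all lie in
`ME(d-1) + Ω`, a set of at most `|Ω| · |ME(d-1)|` elements. Since the symplectic form is
nondegenerate, `dim D - dim C^⊥ₛ = (2n - s) - (n + k) = n - k - s`, so the hypothesis gives
`|Ω| · |ME(d-1)| < 2^(n-k-s) = |D̄|`, and some coset of `D̄` escapes `ME(d-1) + Ω`.
-/

open scoped Pointwise

theorem AddSubgroup.exists_forall_lt_apply_sub_of_card_mul_lt {G : Type*} [AddGroup G]
    (D : AddSubgroup G) (N : G → ℕ) (r : ℕ) {Ω : Set G} (hΩ : Ω ⊆ D)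
    (h : Nat.card Ω * Nat.card {e | e ∈ D ∧ N e ≤ r} < Nat.card D) :
    ∃ ω ∈ D, ∀ i ∈ Ω, r < N (ω - i) := by
  by_contra! hcover
  have hsub : (D : Set G) ⊆ {e | e ∈ D ∧ N e ≤ r} + Ω := fun ω hω => by
    obtain ⟨i, hi, hle⟩ := hcover ω hω
    exact ⟨ω - i, ⟨D.sub_mem hω (hΩ hi), hle⟩, i, hi, sub_add_cancel ω i⟩
  have : Finite D := Nat.finite_of_card_ne_zero (by omega)
  have hfin : ({e | e ∈ D ∧ N e ≤ r} + Ω).Finite :=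
    ((D : Set G).toFinite.subset fun _ he => he.1).add ((D : Set G).toFinite.subset hΩ)
  exact h.not_ge <| mul_comm (Nat.card Ω) _ ▸ (Nat.card_mono hfin hsub).trans Set.natCard_add_le

theorem Submodule.finrank_map_mkQ_add_finrank {K V : Type*} [DivisionRing K] [AddCommGroup V]
    [Module K V] [FiniteDimensional K V] {H D : Submodule K V} (h : H ≤ D) :
    Module.finrank K (D.map H.mkQ) + Module.finrank K H = Module.finrank K D := by
  have hrange : LinearMap.range (H.mkQ ∘ₗ D.subtype) = D.map H.mkQ := by
    rw [LinearMap.range_comp, Submodule.range_subtype]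
  have hker : LinearMap.ker (H.mkQ ∘ₗ D.subtype) = H.comap D.subtype := by
    rw [LinearMap.ker_comp, Submodule.ker_mkQ]
  rw [← hrange, ← (Submodule.comapSubtypeEquivOfLe h).finrank_eq, ← hker]
  exact LinearMap.finrank_range_add_finrank_ker _

lemma symp_comm {n : ℕ} (v w : Vn n) : symp v w = symp w v := by
  simp only [symp]; ring

noncomputable def sympForm (n : ℕ) : LinearMap.BilinForm (ZMod 2) (Vn n) :=
  LinearMap.mk₂ (ZMod 2) symp symp_add_left symp_smul_left
    (fun a b c => by rw [symp_comm, symp_add_left, symp_comm a b, symp_comm a c])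
    (fun c a b => by rw [symp_comm, symp_smul_left, symp_comm a b, smul_eq_mul])

@[simp] lemma sympForm_apply {n : ℕ} (v w : Vn n) : sympForm n v w = symp v w := rfl

lemma sympForm_nondegenerate (n : ℕ) : (sympForm n).Nondegenerate := by
  have hrefl : (sympForm n).IsRefl := fun v w h => by rwa [sympForm_apply, symp_comm] at h
  refine hrefl.nondegenerate_iff_separatingLeft.mpr fun v hv => ?_
  ext j
  · simpa [symp, Pi.single_apply] using hv (0, Pi.single j 1)
  · simpa [symp, Pi.single_apply] using hv (Pi.single j 1, 0)

lemma sympOrtho_eq_orthogonal_span {n : ℕ} (S : Set (Vn n)) :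
    sympOrtho S = (sympForm n).orthogonal (Submodule.span (ZMod 2) S) := by
  ext v
  change (∀ s ∈ S, symp v s = 0) ↔
    Submodule.span (ZMod 2) S ≤ LinearMap.ker ((sympForm n).flip v)
  rw [Submodule.span_le]
  simp [Set.subset_def, symp_comm v]

lemma finrank_sympOrtho {n : ℕ} (S : Set (Vn n)) :
    Module.finrank (ZMod 2) (sympOrtho S) =
      2 * n - Module.finrank (ZMod 2) (Submodule.span (ZMod 2) S) := by
  rw [sympOrtho_eq_orthogonal_span,
    LinearMap.BilinForm.finrank_orthogonal (sympForm_nondegenerate n), Module.finrank_prod,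
    Module.finrank_fin_fun, two_mul]

lemma qnorm_zero {n : ℕ} (H : Submodule (ZMod 2) (Vn n)) : qnorm H 0 = 0 :=
  Nat.sInf_eq_zero.mpr (Or.inl ⟨0, rfl, by simp [wQ]⟩)

lemma qdist_comm {n : ℕ} (H : Submodule (ZMod 2) (Vn n)) (x y : Vn n ⧸ H) :
    qdist H x y = qdist H y x := by
  rw [qdist, qdist, ZModModule.sub_eq_add, ZModModule.sub_eq_add, add_comm]

lemma two_pow_le_natCard_map_sympOrtho {n k : ℕ} {C : Submodule (ZMod 2) (Vn n)}
    (hC : Module.finrank (ZMod 2) C = n - k) {T : Set (Vn n)} (hT : T ⊆ C) :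
    2 ^ (n - Module.finrank (ZMod 2) (Submodule.span (ZMod 2) T)) ≤
      2 ^ k * Nat.card ((sympOrtho T).map (sympOrtho (C : Set (Vn n))).mkQ) := by
  have hdim := Submodule.finrank_map_mkQ_add_finrank
    (show sympOrtho (C : Set (Vn n)) ≤ sympOrtho T from fun v hv t ht => hv t (hT ht))
  have hspan : Module.finrank (ZMod 2) (Submodule.span (ZMod 2) T) ≤ n - k :=
    hC ▸ Submodule.finrank_mono (Submodule.span_le.mpr hT)
  rw [finrank_sympOrtho, finrank_sympOrtho, Submodule.span_eq, hC] at hdim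
  rw [Module.natCard_eq_pow_finrank (K := ZMod 2), Nat.card_zmod, ← pow_add]
  exact Nat.pow_le_pow_right two_pos (by omega)

theorem gv_measurement_bound_general (n k d : ℕ)
    (C : Submodule (ZMod 2) (Vn n))
    (hC : Module.finrank (ZMod 2) C = n - k) (s : ℕ)
    (hs : s = Module.finrank (ZMod 2)
      (Submodule.span (ZMod 2) {c : Vn n | c ∈ C ∧ wQ c ≤ d - 1}))
    (Dbar : Set (Vn n ⧸ sympOrtho (C : Set (Vn n))))
    (hDbar : Dbar = (fun v => (Submodule.Quotient.mk v : Vn n ⧸ sympOrtho (C : Set (Vn n)))) ''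
      (sympOrtho {c : Vn n | c ∈ C ∧ wQ c ≤ d - 1} : Set (Vn n)))
    (Ω : Set (Vn n ⧸ sympOrtho (C : Set (Vn n)))) (hΩD : Ω ⊆ Dbar)
    (hdist : ∀ x ∈ Ω, ∀ y ∈ Ω, x ≠ y → d ≤ qdist (sympOrtho (C : Set (Vn n))) x y)
    (hlt : 2 ^ k * Nat.card Ω *
        Nat.card {e : Vn n ⧸ sympOrtho (C : Set (Vn n)) | e ∈ Dbar ∧
          qnorm (sympOrtho (C : Set (Vn n))) e ≤ d - 1}
      < 2 ^ (n - s)) :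
    ∃ ω : Vn n ⧸ sympOrtho (C : Set (Vn n)), ω ∈ Dbar ∧ ω ∉ Ω ∧
      (∀ i ∈ Ω, d ≤ qdist (sympOrtho (C : Set (Vn n))) ω i) ∧
      (∀ x ∈ Ω ∪ {ω}, ∀ y ∈ Ω ∪ {ω}, x ≠ y →
        d ≤ qdist (sympOrtho (C : Set (Vn n))) x y) := by
  obtain rfl : Dbar = (sympOrtho {c : Vn n | c ∈ C ∧ wQ c ≤ d - 1}).map
      (sympOrtho (C : Set (Vn n))).mkQ := by
    rw [hDbar, Submodule.map_coe]; rfl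
  rw [mul_assoc, hs] at hlt
  have hcard := Nat.lt_of_mul_lt_mul_left <|
    hlt.trans_le (two_pow_le_natCard_map_sympOrtho hC fun _ hc => hc.1)
  generalize (sympOrtho {c : Vn n | c ∈ C ∧ wQ c ≤ d - 1}).map
    (sympOrtho (C : Set (Vn n))).mkQ = Dbar at hΩD hcard ⊢
  obtain ⟨ω, hωD, hfar⟩ := Dbar.toAddSubgroup.exists_forall_lt_apply_sub_of_card_mul_lt
    (qnorm (sympOrtho (C : Set (Vn n)))) (d - 1) hΩD hcard
  have hfar' : ∀ i ∈ Ω, d ≤ qdist (sympOrtho (C : Set (Vn n))) ω i :=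
    fun i hi => Nat.le_of_pred_lt (hfar i hi)
  have hωΩ : ω ∉ Ω := fun hω => by simpa [qnorm_zero] using hfar ω hω
  refine ⟨ω, hωD, hωΩ, hfar', ?_⟩
  have : Std.Symm fun x y => d ≤ qdist (sympOrtho (C : Set (Vn n))) x y :=
    ⟨fun x y h => qdist_comm _ x y ▸ h⟩
  rw [Set.union_singleton]
  exact Set.Pairwise.insert_of_symm hdist fun i hi _ => hfar' i hi

/-- **Gilbert–Varshamov-type measurement bound.** With the notation of the
Hamming-type bound, if `Ω ⊆ D̄` has pairwise quotient distances `≥ d` and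
`2^k · |Ω| · |ME(d-1)| < 2^(n-s)`, then there is a new coset `ω̄ ∈ D̄ \ Ω` at quotient
distance `≥ d` from every codeword of `Ω`, so `Ω ∪ {ω̄}` still has pairwise distances `≥ d`. -/
theorem gv_measurement_bound (n k d : ℕ) (hn : 0 < n) (hk : k ≤ n) (hd : 1 ≤ d)
    (C : Submodule (ZMod 2) (Vn n)) (hself : C ≤ sympOrtho (C : Set (Vn n)))
    (hC : Module.finrank (ZMod 2) C = n - k) (s : ℕ)
    (hs : s = Module.finrank (ZMod 2)
      (Submodule.span (ZMod 2) {c : Vn n | c ∈ C ∧ wQ c ≤ d - 1}))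
    (Dbar : Set (Vn n ⧸ sympOrtho (C : Set (Vn n))))
    (hDbar : Dbar = (fun v => (Submodule.Quotient.mk v : Vn n ⧸ sympOrtho (C : Set (Vn n)))) ''
      (sympOrtho {c : Vn n | c ∈ C ∧ wQ c ≤ d - 1} : Set (Vn n)))
    (Ω : Set (Vn n ⧸ sympOrtho (C : Set (Vn n)))) (hΩD : Ω ⊆ Dbar)
    (hdist : ∀ x ∈ Ω, ∀ y ∈ Ω, x ≠ y → d ≤ qdist (sympOrtho (C : Set (Vn n))) x y)
    (hlt : 2 ^ k * Nat.card Ω *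
        Nat.card {e : Vn n ⧸ sympOrtho (C : Set (Vn n)) | e ∈ Dbar ∧
          qnorm (sympOrtho (C : Set (Vn n))) e ≤ d - 1}
      < 2 ^ (n - s)) :
    ∃ ω : Vn n ⧸ sympOrtho (C : Set (Vn n)), ω ∈ Dbar ∧ ω ∉ Ω ∧
      (∀ i ∈ Ω, d ≤ qdist (sympOrtho (C : Set (Vn n))) ω i) ∧
      (∀ x ∈ Ω ∪ {ω}, ∀ y ∈ Ω ∪ {ω}, x ≠ y →
        d ≤ qdist (sympOrtho (C : Set (Vn n))) x y) :=
  gv_measurement_bound_general n k d C hC s hs Dbar hDbar Ω hΩD hdist hlt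
end
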